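/- arXiv:1104.1224 — 4 statements merged into one kernel-verified Lean document; each statement's English description precedes it below -/
import Mathlib

section
/- Let $k$ be a field and let $D$ and $D'$ be associative unital $k$-algebras equipped with increasing exhaustive filtrations $(\mathrm{Fil}_\alpha D)_{\alpha\in\mathbb{Z}}$ and $(\mathrm{Fil}_\alpha D')_{\alpha\in\mathbb{Z}}$ by $k$-subspaces satisfying $\mathrm{Fil}_\alpha = 0$ for $\alpha < 0$, $1 \in \mathrm{Fil}_0$, and $\mathrm{Fil}_\alpha \cdot \mathrm{Fil}_\beta \subseteq \mathrm{Fil}_{\alpha+\beta}$, and such that $D_0 := \mathrm{Fil}_0 D$ and $D'_0 := \mathrm{Fil}_0 D'$ are commutative subrings. Let $f : D \to D'$ be a $k$-algebra homomorphism with $f(\mathrm{Fil}_\alpha D) \subseteq \mathrm{Fil}_\alpha D'$ for all $\alpha$ (so $f$ restricts to a ring homomorphism $D_0 \to D'_0$, making $D'_0$ a commutative $D_0$-algebra). Assume that $D'_0$ is flat as a $D_0$-module and that for every $\alpha \geq 0$ the natural $D'_0$-linear map $D'_0 \otimes_{D_0} (\mathrm{Fil}_\alpha D / \mathrm{Fil}_{\alpha-1}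 D) \to \mathrm{Fil}_\alpha D' / \mathrm{Fil}_{\alpha-1} D'$ induced by $f$ is bijective. Then for every $\alpha \in \mathbb{Z}$ the natural map of left $D'_0$-modules $D'_0 \otimes_{D_0} \mathrm{Fil}_\alpha D \to \mathrm{Fil}_\alpha D'$, $d' \otimes x \mapsto d' \cdot f(x)$, is bijective; consequently the natural map $D'_0 \otimes_{D_0} D \to D'$, $d' \otimes x \mapsto d' \cdot f(x)$, is an isomorphism of left $D'_0$-modules. -/
/-!
Induction on `α`; in negative degrees both sides vanish. For the step, compare the row
`D'₀ ⊗ Fil_{α-1} D → D'₀ ⊗ Fil_α D → D'₀ ⊗ gr_α D → 0`, exact because `D'₀ ⊗[D₀] -` is right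
exact, with the short exact sequence `0 → Fil_{α-1} D' → Fil_α D' → gr_α D' → 0`: the outer
vertical maps are bijective, so a four-lemma chase makes the middle one bijective. Both
filtrations are exhaustive and `D'₀ ⊗[D₀] -` commutes with directed unions, so bijectivity
passes to `D'₀ ⊗[D₀] D → D'`.
-/

open TensorProduct

section BaseChangeMaps

variable {k : Type*} [Field k]
variable {D₀ : Type*} [CommRing D₀] [Algebra k D₀]
variable {D : Type*} [Ring D] [Algebra k D]
variable {D'₀ : Type*} [CommRing D'₀] [Algebra k D'₀] [Algebra D₀ D'₀]
variable {D' : Type*} [Ring D'] [Algebra k D']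
variable [Module D₀ D] [Module D'₀ D'] [Module D₀ D'] [IsScalarTower D₀ D'₀ D']

/-- A filtered `k`-algebra map `f : D → D'`, viewed as a `D₀`-linear map, where the
`D₀`-module structures on `D` (via `ι` and left multiplication) and on `D'` (via the
restriction `D₀ → D'₀` of `f` and left multiplication) are pinned by `hsmul`, `hsmul'`,
`hcompat`. -/
noncomputable def fLinear
    (ι : D₀ →ₐ[k] D) (ι' : D'₀ →ₐ[k] D')
    (hsmul : ∀ (a : D₀) (x : D), a • x = ι a * x)
    (hsmul' : ∀ (a : D'₀) (y : D'), a • y = ι' a * y)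
    (f : D →ₐ[k] D')
    (hcompat : ∀ a : D₀, f (ι a) = ι' (algebraMap D₀ D'₀ a)) :
    D →ₗ[D₀] D' where
  toFun := f
  map_add' := map_add f
  map_smul' a x := by
    simp only [RingHom.id_apply]
    rw [hsmul, map_mul, hcompat, ← hsmul', algebraMap_smul]

/-- The restriction of `f` to a `D₀`-linear map `Fil α → Fil' α`. -/
noncomputable def resMap
    (ι : D₀ →ₐ[k] D) (ι' : D'₀ →ₐ[k] D')
    (hsmul : ∀ (a : D₀) (x : D), a • x = ι a * x)
    (hsmul' : ∀ (a : D'₀) (y : D'), a • y = ι' a * y)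
    (f : D →ₐ[k] D')
    (hcompat : ∀ a : D₀, f (ι a) = ι' (algebraMap D₀ D'₀ a))
    (Fil : ℤ → Submodule D₀ D) (Fil' : ℤ → Submodule D'₀ D')
    (hffil : ∀ α : ℤ, ∀ x ∈ Fil α, f x ∈ Fil' α) (α : ℤ) :
    (Fil α) →ₗ[D₀] (Fil' α) where
  toFun x := ⟨f x, hffil α x x.2⟩
  map_add' x y := by ext; simp
  map_smul' a x := by
    apply Subtype.ext
    have h1 : f ((a • x : Fil α) : D) = a • f (x : D) := by
      rw [Submodule.coe_smul, hsmul, map_mul, hcompat, ← hsmul', algebraMap_smul]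
    simpa using h1

/-- The natural `D'₀`-linear base-change map `D'₀ ⊗[D₀] Fil α → Fil' α`,
`d' ⊗ x ↦ d' • f x`. -/
noncomputable def filBaseChange
    (ι : D₀ →ₐ[k] D) (ι' : D'₀ →ₐ[k] D')
    (hsmul : ∀ (a : D₀) (x : D), a • x = ι a * x)
    (hsmul' : ∀ (a : D'₀) (y : D'), a • y = ι' a * y)
    (f : D →ₐ[k] D')
    (hcompat : ∀ a : D₀, f (ι a) = ι' (algebraMap D₀ D'₀ a))
    (Fil : ℤ → Submodule D₀ D) (Fil' : ℤ → Submodule D'₀ D')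
    (hffil : ∀ α : ℤ, ∀ x ∈ Fil α, f x ∈ Fil' α) (α : ℤ) :
    D'₀ ⊗[D₀] (Fil α) →ₗ[D'₀] (Fil' α) :=
  LinearMap.liftBaseChange D'₀ (resMap ι ι' hsmul hsmul' f hcompat Fil Fil' hffil α)

/-- The natural `D'₀`-linear base-change map `D'₀ ⊗[D₀] D → D'`, `d' ⊗ x ↦ d' • f x`. -/
noncomputable def fullBaseChange
    (ι : D₀ →ₐ[k] D) (ι' : D'₀ →ₐ[k] D')
    (hsmul : ∀ (a : D₀) (x : D), a • x = ι a * x)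
    (hsmul' : ∀ (a : D'₀) (y : D'), a • y = ι' a * y)
    (f : D →ₐ[k] D')
    (hcompat : ∀ a : D₀, f (ι a) = ι' (algebraMap D₀ D'₀ a)) :
    D'₀ ⊗[D₀] D →ₗ[D'₀] D' :=
  LinearMap.liftBaseChange D'₀ (fLinear ι ι' hsmul hsmul' f hcompat)

/-- The map induced by `f` on the graded piece `Fil α / Fil (α - 1)`, as a `D₀`-linear map
into `Fil' α / Fil' (α - 1)`. -/
noncomputable def gradedPieceMap
    (ι : D₀ →ₐ[k] D) (ι' : D'₀ →ₐ[k] D')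
    (hsmul : ∀ (a : D₀) (x : D), a • x = ι a * x)
    (hsmul' : ∀ (a : D'₀) (y : D'), a • y = ι' a * y)
    (f : D →ₐ[k] D')
    (hcompat : ∀ a : D₀, f (ι a) = ι' (algebraMap D₀ D'₀ a))
    (Fil : ℤ → Submodule D₀ D) (Fil' : ℤ → Submodule D'₀ D')
    (hffil : ∀ α : ℤ, ∀ x ∈ Fil α, f x ∈ Fil' α) (α : ℤ) :
    ((Fil α) ⧸ ((Fil (α - 1)).comap (Fil α).subtype)) →ₗ[D₀]
      ((Fil' α) ⧸ ((Fil' (α - 1)).comap (Fil' α).subtype)) :=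
  (Submodule.Quotient.restrictScalarsEquiv D₀
      ((Fil' (α - 1)).comap (Fil' α).subtype)).toLinearMap.comp
    (Submodule.mapQ ((Fil (α - 1)).comap (Fil α).subtype)
      (((Fil' (α - 1)).comap (Fil' α).subtype).restrictScalars D₀)
      (resMap ι ι' hsmul hsmul' f hcompat Fil Fil' hffil α)
      (fun _ hx => hffil (α - 1) _ hx))

/-- The natural `D'₀`-linear base-change map
`D'₀ ⊗[D₀] (Fil α / Fil (α-1)) → Fil' α / Fil' (α-1)` induced by `f`. -/
noncomputable def gradedBaseChange
    (ι : D₀ →ₐ[k] D) (ι' : D'₀ →ₐ[k] D')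
    (hsmul : ∀ (a : D₀) (x : D), a • x = ι a * x)
    (hsmul' : ∀ (a : D'₀) (y : D'), a • y = ι' a * y)
    (f : D →ₐ[k] D')
    (hcompat : ∀ a : D₀, f (ι a) = ι' (algebraMap D₀ D'₀ a))
    (Fil : ℤ → Submodule D₀ D) (Fil' : ℤ → Submodule D'₀ D')
    (hffil : ∀ α : ℤ, ∀ x ∈ Fil α, f x ∈ Fil' α) (α : ℤ) :
    D'₀ ⊗[D₀] ((Fil α) ⧸ ((Fil (α - 1)).comap (Fil α).subtype)) →ₗ[D'₀]
      ((Fil' α) ⧸ ((Fil' (α - 1)).comap (Fil' α).subtype)) :=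
  LinearMap.liftBaseChange D'₀
    (gradedPieceMap ι ι' hsmul hsmul' f hcompat Fil Fil' hffil α)

end BaseChangeMaps

section FourLemma

variable {S M₁ M₂ M₃ N₁ N₂ N₃ : Type*} [Ring S]
  [AddCommGroup M₁] [AddCommGroup M₂] [AddCommGroup M₃]
  [AddCommGroup N₁] [AddCommGroup N₂] [AddCommGroup N₃]
  [Module S M₁] [Module S M₂] [Module S M₃] [Module S N₁] [Module S N₂] [Module S N₃]
  {f : M₁ →ₗ[S] M₂} {g : M₂ →ₗ[S] M₃} {f' : N₁ →ₗ[S] N₂} {g' : N₂ →ₗ[S] N₃}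
  {i₁ : M₁ →ₗ[S] N₁} {i₂ : M₂ →ₗ[S] N₂} {i₃ : M₃ →ₗ[S] N₃}

theorem LinearMap.bijective_of_bijective_of_bijective_of_right_exact_of_left_exact
    (hc₁ : f' ∘ₗ i₁ = i₂ ∘ₗ f) (hc₂ : g' ∘ₗ i₂ = i₃ ∘ₗ g)
    (hfg : Function.Exact f g) (hg : Function.Surjective g)
    (hfg' : Function.Exact f' g') (hf' : Function.Injective f')
    (hi₁ : Function.Bijective i₁) (hi₃ : Function.Bijective i₃) :
    Function.Bijective i₂ := by
  constructor
  · rw [injective_iff_map_eq_zero]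
    intro m hm
    obtain ⟨a, rfl⟩ := (hfg m).1 <| hi₃.1 <| by
      rw [← LinearMap.comp_apply, ← hc₂, LinearMap.comp_apply, hm, map_zero, map_zero]
    have ha : i₁ a = 0 := hf' <| by
      rw [← LinearMap.comp_apply, hc₁, LinearMap.comp_apply, hm, map_zero]
    rw [hi₁.1 (ha.trans (map_zero i₁).symm), map_zero]
  · intro n
    obtain ⟨c, hc⟩ := hi₃.2 (g' n)
    obtain ⟨m, rfl⟩ := hg c
    obtain ⟨b, hb⟩ := (hfg' (n - i₂ m)).1 <| by
      rw [map_sub, ← hc, ← LinearMap.comp_apply g' i₂, hc₂, LinearMap.comp_apply, sub_self]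
    obtain ⟨a, rfl⟩ := hi₁.2 b
    refine ⟨m + f a, ?_⟩
    rw [map_add, ← LinearMap.comp_apply i₂ f, ← hc₁, LinearMap.comp_apply, hb, add_sub_cancel]

end FourLemma

section BaseChange

variable {R S : Type*} [CommRing R] [CommRing S] [Algebra R S]

theorem LinearMap.bijective_liftBaseChange_of_subsingleton {M N : Type*}
    [AddCommGroup M] [Module R M] [Subsingleton M]
    [AddCommGroup N] [Module R N] [Module S N] [IsScalarTower R S N] [Subsingleton N]
    (l : M →ₗ[R] N) : Function.Bijective (l.liftBaseChange S) :=
  ⟨fun _ _ _ ↦ Subsingleton.elim _ _, fun _ ↦ ⟨0, Subsingleton.elim _ _⟩⟩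

variable {M₁ M₂ M₃ N₁ N₂ N₃ : Type*}
  [AddCommGroup M₁] [AddCommGroup M₂] [AddCommGroup M₃] [Module R M₁] [Module R M₂] [Module R M₃]
  [AddCommGroup N₁] [AddCommGroup N₂] [AddCommGroup N₃] [Module R N₁] [Module R N₂] [Module R N₃]
  [Module S N₁] [Module S N₂] [Module S N₃]
  [IsScalarTower R S N₁] [IsScalarTower R S N₂] [IsScalarTower R S N₃]
  {h₁ : M₁ →ₗ[R] N₁} {h₂ : M₂ →ₗ[R] N₂} {h₃ : M₃ →ₗ[R] N₃}
  {f : M₁ →ₗ[R] M₂} {g : M₂ →ₗ[R] M₃} {f' : N₁ →ₗ[S] N₂} {g' : N₂ →ₗ[S] N₃}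

theorem LinearMap.bijective_liftBaseChange_of_exact
    (comm₁ : h₂ ∘ₗ f = f'.restrictScalars R ∘ₗ h₁)
    (comm₂ : h₃ ∘ₗ g = g'.restrictScalars R ∘ₗ h₂)
    (exact₁ : Function.Exact f g) (surj₁ : Function.Surjective g)
    (exact₂ : Function.Exact f' g') (inj₂ : Function.Injective f')
    (hb₁ : Function.Bijective (h₁.liftBaseChange S))
    (hb₃ : Function.Bijective (h₃.liftBaseChange S)) :
    Function.Bijective (h₂.liftBaseChange S) := by
  refine bijective_of_bijective_of_bijective_of_right_exact_of_left_exact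
    (f := f.baseChange S) (g := g.baseChange S) ?_ ?_ ?_ ?_ exact₂ inj₂ hb₁ hb₃
  · ext m
    simpa using congr($comm₁ m).symm
  · ext m
    simpa using congr($comm₂ m).symm
  · rw [baseChange_eq_ltensor, baseChange_eq_ltensor]
    exact lTensor_exact S exact₁ surj₁
  · rw [baseChange_eq_ltensor]
    exact lTensor_surjective S surj₁

end BaseChange

section Filtration

variable {R S M N : Type*} [CommRing R] [CommRing S] [Algebra R S]
  [AddCommGroup M] [Module R M] [AddCommGroup N] [Module R N] [Module S N] [IsScalarTower R S N]

theorem Submodule.exact_inclusion_mkQ {A : Type*} [Ring A] {P : Type*} [AddCommGroup P]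
    [Module A P] {p₁ p₂ : Submodule A P} (hp : p₁ ≤ p₂) :
    Function.Exact (inclusion hp) (p₁.comap p₂.subtype).mkQ :=
  LinearMap.exact_iff.mpr (by rw [ker_mkQ, range_inclusion])

theorem Submodule.bijective_liftBaseChange_of_le {p₁ p₂ : Submodule R M} {q₁ q₂ : Submodule S N}
    (hp : p₁ ≤ p₂) (hq : q₁ ≤ q₂) {h₁ : p₁ →ₗ[R] q₁} {h₂ : p₂ →ₗ[R] q₂}
    (hh : ∀ x : p₁, (h₂ (inclusion hp x) : N) = h₁ x)
    {ψ : (p₂ ⧸ p₁.comap p₂.subtype) →ₗ[R] (q₂ ⧸ q₁.comap q₂.subtype)}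
    (hψ : ∀ x, ψ (Quotient.mk x) = Quotient.mk (h₂ x))
    (hb₁ : Function.Bijective (h₁.liftBaseChange S))
    (hbψ : Function.Bijective (ψ.liftBaseChange S)) :
    Function.Bijective (h₂.liftBaseChange S) :=
  LinearMap.bijective_liftBaseChange_of_exact (f' := inclusion hq)
    (LinearMap.ext fun x ↦ Subtype.ext (hh x)) (LinearMap.ext hψ)
    (exact_inclusion_mkQ hp) (mkQ_surjective _) (exact_inclusion_mkQ hq) (inclusion_injective hq)
    hb₁ hbψ

theorem bijective_liftBaseChange_filtration_of_graded (φ : M →ₗ[R] N)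
    {F : ℤ → Submodule R M} {F' : ℤ → Submodule S N} (hF : Monotone F) (hF' : Monotone F')
    (hneg : ∀ α < 0, F α = ⊥) (hneg' : ∀ α < 0, F' α = ⊥)
    {h : ∀ α, F α →ₗ[R] F' α} (hh : ∀ α x, (h α x : N) = φ x)
    {gr : ∀ α, (F α ⧸ (F (α - 1)).comap (F α).subtype) →ₗ[R]
      (F' α ⧸ (F' (α - 1)).comap (F' α).subtype)}
    (hgr : ∀ α x, gr α (Submodule.Quotient.mk x) = Submodule.Quotient.mk (h α x))
    (hbij : ∀ α, 0 ≤ α → Function.Bijective ((gr α).liftBaseChange S)) (α : ℤ) :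
    Function.Bijective ((h α).liftBaseChange S) := by
  have base : ∀ β < 0, Function.Bijective ((h β).liftBaseChange S) := fun β hβ ↦ by
    have := (F β).subsingleton_iff_eq_bot.mpr (hneg β hβ)
    have := (F' β).subsingleton_iff_eq_bot.mpr (hneg' β hβ)
    exact LinearMap.bijective_liftBaseChange_of_subsingleton _
  have step : ∀ β, 0 ≤ β → Function.Bijective ((h (β - 1)).liftBaseChange S) →
      Function.Bijective ((h β).liftBaseChange S) := fun β hβ ih ↦
    Submodule.bijective_liftBaseChange_of_le (hF (by omega)) (hF' (by omega))
      (fun x ↦ by rw [hh, hh]; rfl) (hgr β) ih (hbij β hβ)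
  induction α using Int.inductionOn' (b := -1) with
  | zero => exact base (-1) (by norm_num)
  | succ β hβ ih => exact step (β + 1) (by omega) (by rwa [add_sub_cancel_right])
  | pred β hβ _ => exact base (β - 1) (by omega)

theorem Submodule.exists_lTensor_subtype_eq_of_exhaustive {P : Type*} [AddCommGroup P] [Module R P]
    {ι : Type*} [Preorder ι] [IsDirected ι (· ≤ ·)] {F : ι → Submodule R M} (hF : Monotone F)
    (hexh : ∀ x, ∃ i, x ∈ F i) (t : P ⊗[R] M) :
    ∃ i, ∃ s : P ⊗[R] F i, (F i).subtype.lTensor P s = t := by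
  induction t using TensorProduct.induction_on with
  | zero =>
    obtain ⟨i, -⟩ := hexh 0
    exact ⟨i, 0, map_zero _⟩
  | tmul p x =>
    obtain ⟨i, hx⟩ := hexh x
    exact ⟨i, p ⊗ₜ ⟨x, hx⟩, rfl⟩
  | add t₁ t₂ ih₁ ih₂ =>
    obtain ⟨i₁, s₁, rfl⟩ := ih₁
    obtain ⟨i₂, s₂, rfl⟩ := ih₂
    obtain ⟨j, hj₁, hj₂⟩ := directed_of (· ≤ ·) i₁ i₂
    refine ⟨j, (inclusion (hF hj₁)).lTensor P s₁ + (inclusion (hF hj₂)).lTensor P s₂, ?_⟩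
    rw [map_add, ← LinearMap.lTensor_comp_apply, ← LinearMap.lTensor_comp_apply,
      subtype_comp_inclusion, subtype_comp_inclusion]

theorem LinearMap.bijective_liftBaseChange_of_exhaustive (φ : M →ₗ[R] N)
    {ι : Type*} [Preorder ι] [IsDirected ι (· ≤ ·)]
    {F : ι → Submodule R M} {F' : ι → Submodule S N} (hF : Monotone F)
    (hexh : ∀ x, ∃ i, x ∈ F i) (hexh' : ∀ y, ∃ i, y ∈ F' i)
    {h : ∀ i, F i →ₗ[R] F' i} (hh : ∀ i x, (h i x : N) = φ x)
    (hbij : ∀ i, Function.Bijective ((h i).liftBaseChange S)) :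
    Function.Bijective (φ.liftBaseChange S) := by
  have comm : ∀ i s, φ.liftBaseChange S ((F i).subtype.lTensor S s) =
      ((h i).liftBaseChange S s : N) := by
    intro i s
    induction s using TensorProduct.induction_on with
    | zero => simp
    | tmul a x => simp [hh]
    | add s₁ s₂ ih₁ ih₂ => simp [ih₁, ih₂]
  constructor
  · rw [injective_iff_map_eq_zero]
    intro t ht
    obtain ⟨i, s, rfl⟩ := Submodule.exists_lTensor_subtype_eq_of_exhaustive hF hexh t
    have hs : (h i).liftBaseChange S s = 0 := Subtype.ext ((comm i s).symm.trans ht)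
    rw [(hbij i).1 (hs.trans (map_zero _).symm), map_zero]
  · intro y
    obtain ⟨i, hy⟩ := hexh' y
    obtain ⟨s, hs⟩ := (hbij i).2 ⟨y, hy⟩
    exact ⟨(F i).subtype.lTensor S s, by rw [comm, hs]⟩

end Filtration

theorem stmt_0_general
    (k : Type*) [Field k]
    (D₀ : Type*) [CommRing D₀] [Algebra k D₀]
    (D : Type*) [Ring D] [Algebra k D]
    (D'₀ : Type*) [CommRing D'₀] [Algebra k D'₀] [Algebra D₀ D'₀]
    (D' : Type*) [Ring D'] [Algebra k D']
    [Module D₀ D] [Module D'₀ D'] [Module D₀ D'] [IsScalarTower D₀ D'₀ D']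
    -- `D₀` is the degree-`0` part of `D`, acting by left multiplication:
    (ι : D₀ →ₐ[k] D)
    (hsmul : ∀ (a : D₀) (x : D), a • x = ι a * x)
    -- `D'₀` is the degree-`0` part of `D'`, acting by left multiplication:
    (ι' : D'₀ →ₐ[k] D')
    (hsmul' : ∀ (a : D'₀) (y : D'), a • y = ι' a * y)
    -- the filtrations:
    (Fil : ℤ → Submodule D₀ D) (Fil' : ℤ → Submodule D'₀ D')
    (hmono : Monotone Fil) (hmono' : Monotone Fil')
    (hneg : ∀ α : ℤ, α < 0 → Fil α = ⊥) (hneg' : ∀ α : ℤ, α < 0 → Fil' α = ⊥)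
    (hexh : ∀ x : D, ∃ α : ℤ, x ∈ Fil α) (hexh' : ∀ y : D', ∃ α : ℤ, y ∈ Fil' α)
    -- the filtered homomorphism `f`, restricting on degree-`0` parts to `D₀ → D'₀`:
    (f : D →ₐ[k] D')
    (hcompat : ∀ a : D₀, f (ι a) = ι' (algebraMap D₀ D'₀ a))
    (hffil : ∀ α : ℤ, ∀ x ∈ Fil α, f x ∈ Fil' α)
    -- bijectivity of base change on graded pieces in non-negative degrees:
    (hgr : ∀ α : ℤ, 0 ≤ α →
      Function.Bijective (gradedBaseChange ι ι' hsmul hsmul' f hcompat Fil Fil' hffil α)) :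
    (∀ α : ℤ,
        Function.Bijective (filBaseChange ι ι' hsmul hsmul' f hcompat Fil Fil' hffil α)) ∧
      Function.Bijective (fullBaseChange ι ι' hsmul hsmul' f hcompat) := by
  have hres : ∀ α (x : Fil α),
      (resMap ι ι' hsmul hsmul' f hcompat Fil Fil' hffil α x : D') =
        fLinear ι ι' hsmul hsmul' f hcompat x := fun _ _ ↦ rfl
  have hfil := bijective_liftBaseChange_filtration_of_graded _ hmono hmono' hneg hneg' hres
    (gr := gradedPieceMap ι ι' hsmul hsmul' f hcompat Fil Fil' hffil) (fun _ _ ↦ rfl) hgr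
  exact ⟨hfil, LinearMap.bijective_liftBaseChange_of_exhaustive _ hmono hexh hexh' hres hfil⟩

/-- **Base change of filtered rings (Lemma on characteristic cycles, §1.1).**
Let `D`, `D'` be filtered `k`-algebras whose filtrations are exhaustive, increasing,
vanish in negative degrees, contain `1` in degree `0`, and are multiplicative, with
`D₀ = Fil₀ D` and `D'₀ = Fil₀ D'` commutative.  Let `f : D → D'` be a filtered `k`-algebra
homomorphism restricting to `D₀ → D'₀`.  If `D'₀` is flat over `D₀` and the natural maps
`D'₀ ⊗[D₀] (Fil_α D / Fil_{α-1} D) → Fil_α D' / Fil_{α-1} D'` are bijective for all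
`α ≥ 0`, then the natural maps `D'₀ ⊗[D₀] Fil_α D → Fil_α D'` are bijective for all `α`,
and consequently `D'₀ ⊗[D₀] D → D'`, `d' ⊗ x ↦ d' ⬝ f x`, is an isomorphism of left
`D'₀`-modules. -/
theorem stmt_0
    (k : Type*) [Field k]
    (D₀ : Type*) [CommRing D₀] [Algebra k D₀]
    (D : Type*) [Ring D] [Algebra k D]
    (D'₀ : Type*) [CommRing D'₀] [Algebra k D'₀] [Algebra D₀ D'₀]
    (D' : Type*) [Ring D'] [Algebra k D']
    [Module D₀ D] [Module D'₀ D'] [Module D₀ D'] [IsScalarTower D₀ D'₀ D']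
    -- `D₀` is the degree-`0` part of `D`, acting by left multiplication:
    (ι : D₀ →ₐ[k] D) (hι : Function.Injective ι)
    (hsmul : ∀ (a : D₀) (x : D), a • x = ι a * x)
    -- `D'₀` is the degree-`0` part of `D'`, acting by left multiplication:
    (ι' : D'₀ →ₐ[k] D') (hι' : Function.Injective ι')
    (hsmul' : ∀ (a : D'₀) (y : D'), a • y = ι' a * y)
    -- the filtrations:
    (Fil : ℤ → Submodule D₀ D) (Fil' : ℤ → Submodule D'₀ D')
    (hrange : (Fil 0 : Set D) = Set.range ι)
    (hrange' : (Fil' 0 : Set D') = Set.range ι')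
    (hmono : Monotone Fil) (hmono' : Monotone Fil')
    (hneg : ∀ α : ℤ, α < 0 → Fil α = ⊥) (hneg' : ∀ α : ℤ, α < 0 → Fil' α = ⊥)
    (hexh : ∀ x : D, ∃ α : ℤ, x ∈ Fil α) (hexh' : ∀ y : D', ∃ α : ℤ, y ∈ Fil' α)
    (hone : (1 : D) ∈ Fil 0) (hone' : (1 : D') ∈ Fil' 0)
    (hmul : ∀ (α β : ℤ) (x y : D), x ∈ Fil α → y ∈ Fil β → x * y ∈ Fil (α + β))
    (hmul' : ∀ (α β : ℤ) (x y : D'), x ∈ Fil' α → y ∈ Fil' β → x * y ∈ Fil' (α + β))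
    -- the filtered homomorphism `f`, restricting on degree-`0` parts to `D₀ → D'₀`:
    (f : D →ₐ[k] D')
    (hcompat : ∀ a : D₀, f (ι a) = ι' (algebraMap D₀ D'₀ a))
    (hffil : ∀ α : ℤ, ∀ x ∈ Fil α, f x ∈ Fil' α)
    -- flatness of `D'₀` over `D₀`:
    (hflat : Module.Flat D₀ D'₀)
    -- bijectivity of base change on graded pieces in non-negative degrees:
    (hgr : ∀ α : ℤ, 0 ≤ α →
      Function.Bijective (gradedBaseChange ι ι' hsmul hsmul' f hcompat Fil Fil' hffil α)) :
    (∀ α : ℤ,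
        Function.Bijective (filBaseChange ι ι' hsmul hsmul' f hcompat Fil Fil' hffil α)) ∧
      Function.Bijective (fullBaseChange ι ι' hsmul hsmul' f hcompat) :=
  stmt_0_general k D₀ D D'₀ D' ι hsmul ι' hsmul' Fil Fil' hmono hmono' hneg hneg' hexh hexh' f
    hcompat hffil hgr
end

section
/- Let $R$, $S$, $T$, $U$ be commutative integral domains together with injective ring homomorphisms $R \to S$, $R \to T$, $S \to U$, $T \to U$ forming a commutative square, and assume that the intersection of the images of $S$ and of $T$ inside $U$ is equal to the image of $R$. Let $M$ be a finitely generated projective $R$-module. Then, inside $M \otimes_R U$, the intersection of the image of $M \otimes_R S$ (under the map induced by $S \to U$) and the image of $M \otimes_R T$ (under the map induced by $T \to U$) is equal to the image of $M$ under the canonical map $m \mapsto m \otimes 1$. -/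
open TensorProduct

noncomputable def coordAux {R : Type*} [CommRing R] {M : Type*} [AddCommGroup M] [Module R M]
    (c : M →ₗ[R] R) (A : Type*) [CommRing A] [Algebra R A] : M ⊗[R] A →ₗ[R] A :=
  (TensorProduct.lid R A).toLinearMap ∘ₗ LinearMap.rTensor A c

lemma coordAux_tmul {R : Type*} [CommRing R] {M : Type*} [AddCommGroup M] [Module R M]
    (c : M →ₗ[R] R) (A : Type*) [CommRing A] [Algebra R A] (m : M) (a : A) :
    coordAux c A (m ⊗ₜ[R] a) = c m • a := by
  simp [coordAux]

lemma coordAux_compat {R : Type*} [CommRing R] {M : Type*} [AddCommGroup M] [Module R M]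
    (c : M →ₗ[R] R) (A U : Type*) [CommRing A] [Algebra R A] [CommRing U] [Algebra R U]
    [Algebra A U] [IsScalarTower R A U] (y : M ⊗[R] A) :
    coordAux c U (LinearMap.lTensor M (IsScalarTower.toAlgHom R A U).toLinearMap y)
      = algebraMap A U (coordAux c A y) := by
  induction y using TensorProduct.induction_on with
  | zero => simp
  | tmul m a =>
      rw [LinearMap.lTensor_tmul, coordAux_tmul, coordAux_tmul]
      simp [Algebra.smul_def, ← IsScalarTower.algebraMap_apply]
  | add y z hy hz => rw [map_add, map_add, map_add, hy, hz, map_add]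

set_option maxHeartbeats 800000 in
set_option synthInstance.maxHeartbeats 200000 in
/-- **Lemma 2.29 (projector-intersection lemma).**  Given a commuting square of injective
maps of integral domains `R → S`, `R → T`, `S → U`, `T → U` such that the intersection of
the images of `S` and `T` inside `U` equals the image of `R`, and a finitely generated
projective `R`-module `M`, the intersection inside `M ⊗[R] U` of the images of `M ⊗[R] S`
and of `M ⊗[R] T` equals the image of `M` under `m ↦ m ⊗ 1`. -/
theorem stmt_1 (R S T U : Type*) [CommRing R] [CommRing S] [CommRing T] [CommRing U]
    [IsDomain R] [IsDomain S] [IsDomain T] [IsDomain U]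
    [Algebra R S] [Algebra R T] [Algebra R U] [Algebra S U] [Algebra T U]
    [IsScalarTower R S U] [IsScalarTower R T U]
    (hRS : Function.Injective (algebraMap R S))
    (hRT : Function.Injective (algebraMap R T))
    (hSU : Function.Injective (algebraMap S U))
    (hTU : Function.Injective (algebraMap T U))
    (hcap : Set.range (algebraMap S U) ∩ Set.range (algebraMap T U)
              = Set.range (algebraMap R U))
    (M : Type*) [AddCommGroup M] [Module R M] [Module.Finite R M]
    [Module.Projective R M] :
    Set.range (LinearMap.lTensor M (IsScalarTower.toAlgHom R S U).toLinearMap)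
        ∩ Set.range (LinearMap.lTensor M (IsScalarTower.toAlgHom R T U).toLinearMap)
      = Set.range (fun m : M => m ⊗ₜ[R] (1 : U)) := by
  obtain ⟨n, f, g, hfsurj, hginj, hfg⟩ := Module.Finite.exists_comp_eq_id_of_projective R M
  -- dual basis
  set e : Fin n → M := fun i => f (Pi.single i 1) with he
  set c : Fin n → (M →ₗ[R] R) := fun i => (LinearMap.proj i) ∘ₗ g with hc
  have hdual : ∀ m : M, ∑ i, c i m • e i = m := by
    intro m
    have h1 : ∑ i, g m i • (Pi.single i (1 : R) : Fin n → R) = g m := by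
      ext j
      simp [Pi.single_apply]
    have : ∑ i, c i m • e i = f (∑ i, g m i • (Pi.single i (1 : R) : Fin n → R)) := by
      rw [map_sum]
      exact Finset.sum_congr rfl fun i _ => (map_smul f _ _).symm
    rw [this, h1]
    exact LinearMap.congr_fun hfg m
  -- reconstruction over U
  have hrec : ∀ x : M ⊗[R] U, x = ∑ i, e i ⊗ₜ[R] (coordAux (c i) U x) := by
    intro x
    induction x using TensorProduct.induction_on with
    | zero => simp
    | tmul m u =>
        have : ∑ i, e i ⊗ₜ[R] (coordAux (c i) U (m ⊗ₜ u)) = (∑ i, c i m • e i) ⊗ₜ[R] u := by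
          rw [sum_tmul]
          refine Finset.sum_congr rfl fun i _ => ?_
          rw [coordAux_tmul, smul_tmul]
        rw [this, hdual]
    | add x y hx hy =>
        simp only [map_add, tmul_add, Finset.sum_add_distrib, ← hx, ← hy]
  ext x
  constructor
  · rintro ⟨⟨y, hy⟩, ⟨z, hz⟩⟩
    have hmem : ∀ i, coordAux (c i) U x ∈ Set.range (algebraMap R U) := by
      intro i
      rw [← hcap]
      exact ⟨⟨coordAux (c i) S y, by rw [← coordAux_compat (c i) S U y, hy]⟩,
             ⟨coordAux (c i) T z, by rw [← coordAux_compat (c i) T U z, hz]⟩⟩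
    choose r hr using hmem
    refine ⟨∑ i, r i • e i, ?_⟩
    show (∑ i, r i • e i) ⊗ₜ[R] (1 : U) = x
    rw [sum_tmul, hrec x]
    refine Finset.sum_congr rfl fun i _ => ?_
    rw [smul_tmul, ← hr i, Algebra.algebraMap_eq_smul_one]
  · rintro ⟨m, rfl⟩
    exact ⟨⟨m ⊗ₜ[R] (1 : S), by simp⟩, ⟨m ⊗ₜ[R] (1 : T), by simp⟩⟩
end

section
/- Let $R \to R'$ be an injective integral extension of commutative rings (i.e., $R'$ is an $R$-algebra whose structure map is injective and integral), let $M$ be a finite free $R$-module, and let $x \in M$. Then the cyclic submodule $R \cdot x$ is a direct summand of $M$ (i.e., there exists an $R$-submodule $N$ of $M$ with $M = R\cdot x \oplus N$) if and only if the cyclic $R'$-submodule $R' \cdot (x \otimes 1)$ generated by the image of $x$ in $M \otimes_R R'$ is a direct summand of the $R'$-module $M \otimes_R R'$. -/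
/-!
A cyclic submodule `R ∙ x` of a projective module is a direct summand iff some functional `φ`
satisfies `φ x • x = x`. For a free module this says exactly that the ideal `I` generated by the
coordinates of `x` is idempotent, and the coordinates of `1 ⊗ x` generate `I R'`. Idempotence
passes from `I` to `I R'`; for the converse pick `t ∈ I R'` acting as the identity on `I R'`.
Its coefficients generate a subalgebra `S` that is module-finite because `R'` is integral, and
`N = I • S` satisfies `N = I N`. Nakayama gives `r ≡ 1 mod I` killing `N ⊇ I`, and injectivity
of `R → R'` turns this into `r I = 0` in `R`, so `1 - r ∈ I` acts as the identity on `I`.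
-/

open TensorProduct

namespace Ideal

variable {R R' : Type*} [CommRing R] [CommRing R'] [Algebra R R']

theorem exists_fg_subalgebra_mem_smul_of_mem_map [Algebra.IsIntegral R R'] {I : Ideal R}
    {t : R'} (ht : t ∈ I.map (algebraMap R R')) :
    ∃ S : Subalgebra R R', (Subalgebra.toSubmodule S).FG ∧ t ∈ I • Subalgebra.toSubmodule S := by
  rw [← Submodule.restrictScalars_mem R, ← smul_top_eq_map, ← Submodule.span_univ,
    ← Set.range_id, Submodule.mem_ideal_smul_span_iff_exists_sum] at ht
  obtain ⟨a, haI, rfl⟩ := ht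
  refine ⟨Algebra.adjoin R a.support, fg_adjoin_of_finite a.support.finite_toSet
    fun y _ ↦ Algebra.IsIntegral.isIntegral y, Submodule.sum_mem _ fun y hy ↦ ?_⟩
  exact Submodule.smul_mem_smul (haI y) (Algebra.subset_adjoin hy)

theorem exists_mem_mul_eq_self_of_map (hf : Function.Injective (algebraMap R R'))
    [Algebra.IsIntegral R R'] {I : Ideal R} (hI : I.FG) {t : R'}
    (ht : t ∈ I.map (algebraMap R R')) (hta : ∀ a ∈ I, t * algebraMap R R' a = algebraMap R R' a) :
    ∃ c ∈ I, ∀ a ∈ I, c * a = a := by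
  obtain ⟨S, hSfg, htS⟩ := exists_fg_subalgebra_mem_smul_of_mem_map ht
  set N := I • Subalgebra.toSubmodule S
  have hmul : ∀ s ∈ S, s * t ∈ N := fun s hs ↦ by
    refine Submodule.smul_induction_on htS (fun r hr u hu ↦ ?_) fun y z hy hz ↦ ?_
    · rw [mul_smul_comm]
      exact Submodule.smul_mem_smul hr (S.mul_mem hs hu)
    · rw [mul_add]
      exact N.add_mem hy hz
  have hN : N ≤ I • N := Submodule.smul_le.mpr fun r hr s hs ↦ by
    rw [show r • s = r • (s * t) by
      rw [Algebra.smul_def r s, Algebra.smul_def r, mul_comm s t, ← mul_assoc, mul_comm _ t,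
        hta r hr]]
    exact Submodule.smul_mem_smul hr (hmul s hs)
  obtain ⟨r, hr1, hr0⟩ := Submodule.exists_sub_one_mem_and_smul_eq_zero_of_fg_of_le_smul I N
    (Submodule.FG.smul hI hSfg) hN
  refine ⟨1 - r, by simpa using I.neg_mem hr1, fun a ha ↦ ?_⟩
  have hra : r * a = 0 := hf <| by
    rw [map_mul, map_zero, ← Algebra.smul_def, ← hta a ha, mul_comm]
    exact hr0 _ (hmul _ (S.algebraMap_mem a))
  rw [sub_mul, hra, one_mul, sub_zero]

theorem isIdempotentElem_map_iff (hf : Function.Injective (algebraMap R R'))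
    [Algebra.IsIntegral R R'] {I : Ideal R} (hI : I.FG) :
    IsIdempotentElem (I.map (algebraMap R R')) ↔ IsIdempotentElem I := by
  refine ⟨fun h ↦ ?_, fun h ↦ by rw [IsIdempotentElem, ← Ideal.map_mul, h.eq]⟩
  obtain ⟨t, ht, htI⟩ := Submodule.exists_mem_and_smul_eq_self_of_fg_of_le_smul _ _
    (hI.map (algebraMap R R')) h.ge
  obtain ⟨c, hc, hcI⟩ := exists_mem_mul_eq_self_of_map hf hI ht
    fun a ha ↦ htI _ (mem_map_of_mem _ ha)
  exact le_antisymm mul_le_right fun a ha ↦ hcI a ha ▸ mul_mem_mul hc ha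

end Ideal

theorem Submodule.exists_isCompl_span_singleton_iff {A M : Type*} [CommRing A] [AddCommGroup M]
    [Module A M] [Module.Projective A M] (x : M) :
    (∃ N : Submodule A M, IsCompl (span A {x}) N) ↔ ∃ φ : Module.Dual A M, φ x • x = x := by
  have hx : x ∈ span A {x} := mem_span_singleton_self x
  let ρ : A →ₗ[A] span A {x} :=
    (LinearMap.toSpanSingleton A M x).codRestrict _ fun r ↦ smul_mem _ r hx
  constructor
  · rintro ⟨N, hN⟩
    have hρ : Function.Surjective ρ := by
      rintro ⟨y, hy⟩
      obtain ⟨r, rfl⟩ := mem_span_singleton.mp hy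
      exact ⟨r, rfl⟩
    obtain ⟨φ, hφ⟩ := Module.projective_lifting_property ρ (projectionOnto _ N hN) hρ
    refine ⟨φ, congrArg Subtype.val (?_ : ρ (φ x) = ⟨x, hx⟩)⟩
    rw [← LinearMap.comp_apply, hφ]
    exact projectionOnto_apply_left hN ⟨x, hx⟩
  · rintro ⟨φ, hφ⟩
    refine ⟨LinearMap.ker (ρ ∘ₗ φ), LinearMap.isCompl_of_proj fun ⟨y, hy⟩ ↦ ?_⟩
    obtain ⟨r, rfl⟩ := mem_span_singleton.mp hy
    ext
    change φ (r • x) • x = r • x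
    rw [map_smul, smul_eq_mul, mul_smul, hφ]

theorem Module.Basis.exists_dual_smul_eq_self_iff {ι R M : Type*} [CommRing R] [AddCommGroup M]
    [Module R M] (b : Basis ι R M) (x : M) :
    (∃ φ : Dual R M, φ x • x = x) ↔ IsIdempotentElem (Ideal.span (Set.range (b.repr x))) := by
  set I := Ideal.span (Set.range (b.repr x))
  constructor
  · rintro ⟨φ, hφ⟩
    have hφI : φ x ∈ I := by
      rw [← b.linearCombination_repr x, Finsupp.linearCombination_apply, map_finsuppSum]
      refine Ideal.sum_mem _ fun i _ ↦ ?_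
      simp only [map_smul, smul_eq_mul]
      exact I.mul_mem_right _ (Ideal.subset_span ⟨i, rfl⟩)
    refine le_antisymm Ideal.mul_le_right (Ideal.span_le.mpr ?_)
    rintro _ ⟨i, rfl⟩
    have hi : φ x * b.repr x i = b.repr x i := by
      simpa using congrArg (b.repr · i) hφ
    exact hi ▸ Ideal.mul_mem_mul hφI (Ideal.subset_span ⟨i, rfl⟩)
  · intro h
    obtain ⟨e, he, hIe⟩ :=
      (Ideal.isIdempotentElem_iff_of_fg I (Submodule.fg_span (b.repr x).finite_range)).mp h
    obtain ⟨c, hc⟩ := Finsupp.mem_span_range_iff_exists_finsupp.mp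
      (hIe ▸ Ideal.mem_span_singleton_self e : e ∈ I)
    refine ⟨c.sum fun i u ↦ u • b.coord i, ?_⟩
    have hφx : (c.sum fun i u ↦ u • b.coord i) x = e := by
      rw [← hc, Finsupp.sum, Finsupp.sum, LinearMap.sum_apply]
      simp
    rw [hφx]
    refine b.ext_elem fun i ↦ ?_
    have hi : b.repr x i ∈ R ∙ e := hIe ▸ Ideal.subset_span ⟨i, rfl⟩
    obtain ⟨r, hr⟩ := Submodule.mem_span_singleton.mp hi
    rw [map_smul, Finsupp.smul_apply, ← hr, smul_eq_mul, smul_eq_mul, mul_left_comm, he.eq]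

theorem Module.Basis.span_range_baseChange_repr_one_tmul {ι R M : Type*} (R' : Type*)
    [CommRing R] [CommRing R'] [Algebra R R'] [AddCommGroup M] [Module R M]
    (b : Basis ι R M) (x : M) :
    Ideal.span (Set.range ((b.baseChange R').repr (1 ⊗ₜ x))) =
      (Ideal.span (Set.range (b.repr x))).map (algebraMap R R') := by
  rw [Ideal.map_span, ← Set.range_comp]
  congr 2
  ext i
  simp [Algebra.smul_def]

theorem stmt_2_general (R R' : Type*) [CommRing R] [CommRing R'] [Algebra R R']
    (hinj : Function.Injective (algebraMap R R'))
    (hint : Algebra.IsIntegral R R')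
    (M : Type*) [AddCommGroup M] [Module R M] [Module.Free R M]
    (x : M) :
    (∃ N : Submodule R M, IsCompl (Submodule.span R {x}) N) ↔
      ∃ N' : Submodule R' (R' ⊗[R] M),
        IsCompl (Submodule.span R' {(1 : R') ⊗ₜ[R] x}) N' := by
  have := hint
  let b := Module.Free.chooseBasis R M
  rw [Submodule.exists_isCompl_span_singleton_iff, Submodule.exists_isCompl_span_singleton_iff,
    b.exists_dual_smul_eq_self_iff, (b.baseChange R').exists_dual_smul_eq_self_iff,
    b.span_range_baseChange_repr_one_tmul R',
    Ideal.isIdempotentElem_map_iff hinj (Submodule.fg_span (b.repr x).finite_range)]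

/-- **Lemma 2.20.**  Let `R → R'` be an injective integral extension of commutative rings,
`M` a finite free `R`-module, and `x ∈ M`.  Then `R • x` is a direct summand of `M`
(i.e. admits a complementary submodule) if and only if the cyclic `R'`-submodule generated
by the image of `x` in `R' ⊗[R] M` is a direct summand of the `R'`-module `R' ⊗[R] M`. -/
theorem stmt_2 (R R' : Type*) [CommRing R] [CommRing R'] [Algebra R R']
    (hinj : Function.Injective (algebraMap R R'))
    (hint : Algebra.IsIntegral R R')
    (M : Type*) [AddCommGroup M] [Module R M] [Module.Finite R M] [Module.Free R M]
    (x : M) :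
    (∃ N : Submodule R M, IsCompl (Submodule.span R {x}) N) ↔
      ∃ N' : Submodule R' (R' ⊗[R] M),
        IsCompl (Submodule.span R' {(1 : R') ⊗ₜ[R] x}) N' :=
  stmt_2_general R R' hinj hint M x
end

section
/- Let $k$ be a field of characteristic zero, let $n \geq 1$ and $0 \leq m \leq n$ be integers, and let $P = k[x_1, \dots, x_n]$ be the polynomial ring. Inside the $k$-algebra $\mathrm{End}_k(P)$ of $k$-linear endomorphisms of $P$, let $X_i$ denote multiplication by $x_i$ and $\partial_i$ the partial derivative with respect to $x_i$. Let $W \subseteq \mathrm{End}_k(P)$ be the $k$-subalgebra generated by $X_1, \dots, X_n, \partial_1, \dots, \partial_n$ (the Weyl algebra), and let $W^{\log} \subseteq W$ be the $k$-subalgebra generated by $X_1, \dots, X_n$, the compositions $X_1 \partial_1, \dots, X_m \partial_m$, and $\partial_{m+1}, \dots, \partial_n$. Let $M$ be a left $W$-module, and suppose there exist a constant $c > 0$ and an increasing exhaustive family $(\mathrm{Fil}_\alpha)_{\alpha \in \mathbb{N}}$ of finite-dimensional $k$-subspaces of $M$ (increasing: $\mathrm{Fil}_\alpha \subseteq \mathrm{Fil}_{\alpha+1}$;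 exhaustive: $\bigcup_\alpha \mathrm{Fil}_\alpha = M$) such that $s \cdot \mathrm{Fil}_\alpha \subseteq \mathrm{Fil}_{\alpha+1}$ for every $s \in \{X_1, \dots, X_n, \partial_1, \dots, \partial_n\}$ and every $\alpha$, and $\dim_k \mathrm{Fil}_\alpha \leq c\,\alpha^n$ for all $\alpha \geq 1$. Then for every $W^{\log}$-submodule $M_0 \subseteq M$ there exist a constant $c' > 0$ and an increasing exhaustive family $(\mathrm{Fil}'_\alpha)_{\alpha \in \mathbb{N}}$ of finite-dimensional $k$-subspaces of $M_0$ such that $s \cdot \mathrm{Fil}'_\alpha \subseteq \mathrm{Fil}'_{\alpha+1}$ for every $s \in \{X_1, \dots, X_n, X_1\partial_1, \dots, X_m\partial_m, \partial_{m+1}, \dots, \partial_n\}$ and every $\alpha$, and $\dim_k \mathrm{Fil}'_\alpha \leq c'\,\alpha^n$ for all $\alpha \geq 1$. -/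
open MvPolynomial

/-- Multiplication by the variable `xᵢ`, as a `k`-linear endomorphism of `k[x₁, …, xₙ]`. -/
noncomputable def weylX (k : Type*) [CommSemiring k] (n : ℕ) (i : Fin n) :
    Module.End k (MvPolynomial (Fin n) k) :=
  LinearMap.mulLeft k (X i)

/-- The partial derivative `∂ᵢ`, as a `k`-linear endomorphism of `k[x₁, …, xₙ]`. -/
noncomputable def weylD (k : Type*) [CommSemiring k] (n : ℕ) (i : Fin n) :
    Module.End k (MvPolynomial (Fin n) k) :=
  (pderiv i).toLinearMap

/-- The generators `X₁, …, Xₙ, ∂₁, …, ∂ₙ` of the Weyl algebra. -/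
noncomputable def weylGens (k : Type*) [CommSemiring k] (n : ℕ) :
    Set (Module.End k (MvPolynomial (Fin n) k)) :=
  Set.range (weylX k n) ∪ Set.range (weylD k n)

/-- The Weyl algebra: the `k`-subalgebra of `End_k(k[x₁, …, xₙ])` generated by the
multiplication operators `Xᵢ` and the partial derivatives `∂ᵢ`. -/
noncomputable def Weyl (k : Type*) [CommSemiring k] (n : ℕ) :
    Subalgebra k (Module.End k (MvPolynomial (Fin n) k)) :=
  Algebra.adjoin k (weylGens k n)

/-- The logarithmic generators `X₁, …, Xₙ, X₁∂₁, …, Xₘ∂ₘ, ∂_{m+1}, …, ∂ₙ`. -/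
noncomputable def weylLogGens (k : Type*) [CommSemiring k] (n m : ℕ) :
    Set (Module.End k (MvPolynomial (Fin n) k)) :=
  Set.range (weylX k n) ∪
    {s | ∃ i : Fin n, (i : ℕ) < m ∧ s = weylX k n i * weylD k n i} ∪
    {s | ∃ i : Fin n, m ≤ (i : ℕ) ∧ s = weylD k n i}

/-- The logarithmic Weyl algebra: the `k`-subalgebra of `End_k(k[x₁, …, xₙ])` generated by
`X₁, …, Xₙ`, `X₁∂₁, …, Xₘ∂ₘ`, and `∂_{m+1}, …, ∂ₙ`. -/
noncomputable def WeylLog (k : Type*) [CommSemiring k] (n m : ℕ) :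
    Subalgebra k (Module.End k (MvPolynomial (Fin n) k)) :=
  Algebra.adjoin k (weylLogGens k n m)

/-- **Theorem 1.17 (holonomic implies log-holonomic), Bernstein-filtration form.**
If a module `M` over the Weyl algebra `W` admits an exhaustive increasing filtration by
finite-dimensional `k`-subspaces, compatible with the Bernstein generators and of growth
`≤ c αⁿ`, then every `W^log`-submodule `M₀ ⊆ M` admits such a filtration compatible with
the logarithmic generators and of growth `≤ c' αⁿ`. -/
theorem stmt_4 (k : Type*) [Field k] [CharZero k] (n m : ℕ) (hn : 1 ≤ n) (hm : m ≤ n)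
    (M : Type*) [AddCommGroup M] [Module k M]
    [Module (Weyl k n) M] [IsScalarTower k (Weyl k n) M]
    (c : ℝ) (hc : 0 < c)
    (Fil : ℕ → Submodule k M)
    (hmono : Monotone Fil)
    (hexh : ∀ x : M, ∃ α : ℕ, x ∈ Fil α)
    (hfd : ∀ α : ℕ, FiniteDimensional k (Fil α))
    (hstab : ∀ s : Weyl k n, (s : Module.End k (MvPolynomial (Fin n) k)) ∈ weylGens k n →
      ∀ α : ℕ, ∀ x ∈ Fil α, s • x ∈ Fil (α + 1))
    (hbound : ∀ α : ℕ, 1 ≤ α → (Module.finrank k (Fil α) : ℝ) ≤ c * (α : ℝ) ^ n)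
    (M₀ : Submodule k M)
    (hM₀ : ∀ s : Weyl k n, (s : Module.End k (MvPolynomial (Fin n) k)) ∈ WeylLog k n m →
      ∀ x ∈ M₀, s • x ∈ M₀) :
    ∃ c' : ℝ, 0 < c' ∧ ∃ Fil' : ℕ → Submodule k M,
      (∀ α : ℕ, Fil' α ≤ M₀) ∧
      Monotone Fil' ∧
      (∀ x ∈ M₀, ∃ α : ℕ, x ∈ Fil' α) ∧
      (∀ α : ℕ, FiniteDimensional k (Fil' α)) ∧
      (∀ s : Weyl k n, (s : Module.End k (MvPolynomial (Fin n) k)) ∈ weylLogGens k n m →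
        ∀ α : ℕ, ∀ x ∈ Fil' α, s • x ∈ Fil' (α + 1)) ∧
      (∀ α : ℕ, 1 ≤ α → (Module.finrank k (Fil' α) : ℝ) ≤ c' * (α : ℝ) ^ n) := by
  classical
  refine ⟨2 ^ n * c, by positivity, fun α => Fil (2 * α) ⊓ M₀, fun α => inf_le_right,
    fun a b hab => inf_le_inf (hmono (by omega)) le_rfl, ?_, ?_, ?_, ?_⟩
  · intro x hx
    obtain ⟨α, hα⟩ := hexh x
    exact ⟨α, ⟨hmono (by omega) hα, hx⟩⟩
  · intro α
    have := hfd (2 * α)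
    infer_instance
  · intro s hs α x hx
    have hsM : (s : Module.End k (MvPolynomial (Fin n) k)) ∈ WeylLog k n m :=
      Algebra.subset_adjoin hs
    refine ⟨?_, hM₀ s hsM x hx.2⟩
    have hx2 : x ∈ Fil (2 * α) := hx.1
    rcases hs with (⟨i, hi⟩ | ⟨i, _, hi⟩) | ⟨i, _, hi⟩
    · have : s • x ∈ Fil (2 * α + 1) := hstab s (Or.inl ⟨i, hi⟩) _ x hx2
      exact hmono (by omega) this
    · have hXmem : weylX k n i ∈ Weyl k n := Algebra.subset_adjoin (Or.inl ⟨i, rfl⟩)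
      have hDmem : weylD k n i ∈ Weyl k n := Algebra.subset_adjoin (Or.inr ⟨i, rfl⟩)
      have hseq : s = (⟨weylX k n i, hXmem⟩ : Weyl k n) * ⟨weylD k n i, hDmem⟩ :=
        Subtype.ext hi
      have h1 : (⟨weylD k n i, hDmem⟩ : Weyl k n) • x ∈ Fil (2 * α + 1) :=
        hstab _ (Or.inr ⟨i, rfl⟩) _ x hx2
      have h2 : (⟨weylX k n i, hXmem⟩ : Weyl k n) •
          ((⟨weylD k n i, hDmem⟩ : Weyl k n) • x) ∈ Fil (2 * α + 2) :=
        hstab _ (Or.inl ⟨i, rfl⟩) _ _ h1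
      rw [hseq, mul_smul]
      have : 2 * α + 2 = 2 * (α + 1) := by omega
      rwa [← this]
    · have : s • x ∈ Fil (2 * α + 1) := hstab s (Or.inr ⟨i, hi.symm⟩) _ x hx2
      exact hmono (by omega) this
  · intro α hα
    have h2α : 1 ≤ 2 * α := by omega
    have hfin := hfd (2 * α)
    have hle : Module.finrank k ↥(Fil (2 * α) ⊓ M₀) ≤ Module.finrank k ↥(Fil (2 * α)) :=
      Submodule.finrank_mono inf_le_left
    calc (Module.finrank k ↥(Fil (2 * α) ⊓ M₀) : ℝ) ≤ Module.finrank k ↥(Fil (2 * α)) := by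
          exact_mod_cast hle
      _ ≤ c * ((2 * α : ℕ) : ℝ) ^ n := hbound _ h2α
      _ = 2 ^ n * c * (α : ℝ) ^ n := by push_cast; ring
end
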